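/- Let C ⊂ F^{m-1} be a 1-code and Ċ = {(1,x) : x ∈ C}. Then P(C) := (H_m \ ⋃_{δ∈Ċ}(R_δ + δ̄ − e^{(δ)})) ∪ ⋃_{δ∈Ċ}(R_δ + δ̄) is a 1-perfect code in F^n, and moreover C = { x ∈ F^{m-1} : (1, x, 0^{n-m}) ∈ P(C) }. -/

import Mathlib

variable {F : Type*} [Field F] [Fintype F] [DecidableEq F] {m : ℕ}

def IsProj (α : Fin m → F) : Prop :=
  ∃ i, α i = 1 ∧ ∀ j < i, α j = 0

instance : DecidablePred (IsProj (F := F) (m := m)) :=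
  fun α => decidable_of_iff (∃ i, α i = 1 ∧ ∀ j < i, α j = 0) Iff.rfl

/-- The projective points: nonzero vectors with first nonzero coordinate 1. -/
abbrev PA (F : Type*) [Field F] [Fintype F] [DecidableEq F] (m : ℕ) : Type _ :=
  {α : Fin m → F // IsProj α}

/-- The Hamming code of length (q^m-1)/(q-1). -/
def Hcode (F : Type*) [Field F] [Fintype F] [DecidableEq F] (m : ℕ) : Set (PA F m → F) :=
  {c | ∑ α : PA F m, c α • (α : Fin m → F) = 0}

/-- Zero-extension of a vector of F^m to a word indexed by PA F m. -/
def bar (α : Fin m → F) : PA F m → F :=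
  fun β => ∑ i, if (β : Fin m → F) = Pi.single i 1 then α i else 0

/-- The linear δ-component: span of the weight-3 codewords with value 1 at δ. -/
def Rcomp (δ : PA F m) : Submodule F (PA F m → F) :=
  Submodule.span F {c | c ∈ Hcode F m ∧ hammingNorm c = 3 ∧ c δ = 1}

/-- A 1-perfect code: radius-1 balls around codewords partition the space. -/
def IsPerfect {ι : Type*} [Fintype ι] (P : Set (ι → F)) : Prop :=
  ∀ z : ι → F, ∃! c, c ∈ P ∧ hammingDist z c ≤ 1

/-- A 1-code: radius-1 balls around codewords are pairwise disjoint. -/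
def IsOneCode {ι : Type*} [Fintype ι] (C : Set (ι → F)) : Prop :=
  ∀ x ∈ C, ∀ y ∈ C, x ≠ y → ∀ z, ¬(hammingDist x z ≤ 1 ∧ hammingDist y z ≤ 1)

/-- The radius-1 neighborhood of a set of words. -/
def nbhd {ι : Type*} [Fintype ι] (M : Set (ι → F)) : Set (ι → F) :=
  {y | ∃ x ∈ M, hammingDist x y ≤ 1}

/-- The projective point corresponding to the standard basis vector π^(i). -/
def singleProj (i : Fin m) : PA F m :=
  ⟨Pi.single i 1, i, by simp, fun j hj => Pi.single_eq_of_ne (Fin.ne_of_lt hj) 1⟩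

/-- The projective point (1, x). -/
def consProj {s : ℕ} (x : Fin s → F) : PA F (s+1) :=
  ⟨Fin.cons 1 x, 0, by simp, fun j hj => absurd hj (by simp)⟩

/-- The δ-component of the Hamming code associated with x, for δ = (1,x). -/
def compCoset {s : ℕ} (x : Fin s → F) : Set (PA F (s+1) → F) :=
  (· + (bar (Fin.cons 1 x) - Pi.single (consProj x) 1)) '' (Rcomp (consProj x) : Set (PA F (s+1) → F))

/-- The 1-perfect code P(C) obtained by switching the components indexed by C. -/
def PCode {s : ℕ} (C : Set (Fin s → F)) : Set (PA F (s+1) → F) :=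
  (Hcode F (s+1) \ ⋃ x ∈ C, compCoset x) ∪
    ⋃ x ∈ C, (· + bar (Fin.cons 1 x)) '' (Rcomp (consProj x) : Set (PA F (s+1) → F))

/-!
The Hamming code is perfect, and for `δ = (1, x)` the coset `K_x = R_δ + δ̄ - e^(δ)` of the linear
component lies in it. Adding a multiple of `e^(δ)` to a word at distance at most 1 from `R_δ` keeps
it at distance at most 1: the weight-3 word of `R_δ` on `δ`, the error position and the third point
of their line absorbs the change. Hence `R_δ + δ̄` is a 1-code with the same radius-1 neighbourhood
as `K_x`, and exchanging the `K_x`, `x ∈ C`, for these translates keeps the code perfect once the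
`K_x` are pairwise disjoint.

For `x, y` at distance at least 3, disjointness is witnessed by `ψ u = if A u = 0 then B u else 0`
with linear forms `A`, `B` vanishing at `(1, x)` and `(1, y)`: on each weight-3 word through one of
these points `ψ` behaves linearly, so `c ↦ ∑ α, c α * ψ α` annihilates both linear components, while
a suitable choice of `A`, `B` makes it nonzero on the difference of the coset representatives.
Finally `δ̄` has syndrome `δ`, which recovers `C` from `P(C)`.
-/

section Hamming

variable {ι M : Type*} [Fintype ι] [DecidableEq ι]

theorem hammingNorm_single_le_one [AddCommMonoid M] [DecidableEq M] (i : ι) (a : M) :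
    hammingNorm (Pi.single i a : ι → M) ≤ 1 := by
  refine (Finset.card_le_card fun j hj => ?_).trans (Finset.card_singleton i).le
  by_contra hji
  exact (Finset.mem_filter.1 hj).2 (by simp [Finset.notMem_singleton.1 hji])

theorem hammingNorm_le_one_iff [Nonempty ι] [AddCommMonoid M] [DecidableEq M] {v : ι → M} :
    hammingNorm v ≤ 1 ↔ ∃ i a, v = Pi.single i a := by
  refine ⟨fun h => ?_, fun ⟨i, a, hv⟩ => hv ▸ hammingNorm_single_le_one i a⟩
  obtain ⟨i, hi⟩ := Finset.card_le_one_iff_subset_singleton.1 h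
  refine ⟨i, v i, funext fun j => ?_⟩
  by_cases hji : j = i
  · rw [hji, Pi.single_eq_same]
  · rw [Pi.single_eq_of_ne hji]
    by_contra hj
    exact hji (Finset.mem_singleton.1 (hi (Finset.mem_filter.2 ⟨Finset.mem_univ j, hj⟩)))

theorem hammingDist_le_one_iff [Nonempty ι] [AddCommGroup M] [DecidableEq M] {c z : ι → M} :
    hammingDist c z ≤ 1 ↔ ∃ i a, z = c + Pi.single i a := by
  rw [hammingDist_eq_hammingNorm, hammingNorm_le_one_iff]
  exact exists₂_congr fun i a => neg_add_eq_iff_eq_add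

theorem exists_eq_single_add_single_add_single [AddCommMonoid M] [DecidableEq M] {c : ι → M}
    {δ : ι} (hc : hammingNorm c = 3) (hδ : c δ ≠ 0) :
    ∃ β γ, c = Pi.single δ (c δ) + Pi.single β (c β) + Pi.single γ (c γ) := by
  set S := Finset.univ.filter fun i => c i ≠ 0
  have hδS : δ ∈ S := Finset.mem_filter.2 ⟨Finset.mem_univ δ, hδ⟩
  obtain ⟨β, γ, hβγ, hS⟩ := Finset.card_eq_two.1 (by
    rw [Finset.card_erase_of_mem hδS]; exact congrArg (· - 1) hc : (S.erase δ).card = 2)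
  refine ⟨β, γ, ?_⟩
  calc c = ∑ i, Pi.single i (c i) := (Finset.univ_sum_single c).symm
    _ = ∑ i ∈ S, Pi.single i (c i) :=
      (Finset.sum_subset (Finset.subset_univ S) fun i _ hi => by simp_all [S]).symm
    _ = _ := by
      rw [← Finset.insert_erase hδS, Finset.sum_insert (Finset.notMem_erase δ S), hS,
        Finset.sum_pair hβγ, add_assoc]

theorem hammingNorm_single_add_single_add_single [AddCommMonoid M] [DecidableEq M]
    {δ β γ : ι} (hβδ : β ≠ δ) (hγδ : γ ≠ δ) (hγβ : γ ≠ β) {a b d : M} (ha : a ≠ 0) (hb : b ≠ 0)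
    (hd : d ≠ 0) :
    hammingNorm (Pi.single δ a + Pi.single β b + Pi.single γ d : ι → M) = 3 := by
  have hsupp : (Finset.univ.filter fun i =>
      (Pi.single δ a + Pi.single β b + Pi.single γ d : ι → M) i ≠ 0) = {δ, β, γ} := by
    ext i
    by_cases hiδ : i = δ <;> by_cases hiβ : i = β <;> by_cases hiγ : i = γ <;>
      simp_all [Pi.single_apply]
  rw [hammingNorm, hsupp, Finset.card_eq_three]
  exact ⟨δ, β, γ, hβδ.symm, hγδ.symm, hγβ.symm, rfl⟩

end Hamming

section Codes

variable {ι M : Type*} [Fintype ι] [DecidableEq M]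

theorem IsPerfect.isOneCode {H : Set (ι → M)} (hH : IsPerfect H) : IsOneCode H :=
  fun x hx y hy hxy z ⟨hxz, hyz⟩ => hxy <| (hH z).unique
    ⟨hx, by rwa [hammingDist_comm]⟩ ⟨hy, by rwa [hammingDist_comm]⟩

theorem IsOneCode.mono {C D : Set (ι → M)} (hD : IsOneCode D) (hCD : C ⊆ D) : IsOneCode C :=
  fun x hx y hy => hD x (hCD hx) y (hCD hy)

theorem hammingDist_add_eq_hammingDist_sub [AddCommGroup M] (x z v : ι → M) :
    hammingDist (x + v) z = hammingDist x (z - v) := by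
  rw [hammingDist_eq_hammingNorm, hammingDist_eq_hammingNorm, neg_add_eq_sub, neg_add_eq_sub,
    sub_sub, add_comm]

theorem IsOneCode.image_add [AddCommGroup M] {C : Set (ι → M)} (hC : IsOneCode C) (v : ι → M) :
    IsOneCode ((· + v) '' C) := by
  rintro _ ⟨x, hx, rfl⟩ _ ⟨y, hy, rfl⟩ hxy z
  simpa only [hammingDist_add_eq_hammingDist_sub] using
    hC x hx y hy (fun h => hxy (h ▸ rfl)) (z - v)

theorem mem_nbhd_image_add [AddCommGroup M] {S : Set (ι → M)} {v z : ι → M} :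
    z ∈ nbhd ((· + v) '' S) ↔ z - v ∈ nbhd S := by
  simp only [nbhd, Set.mem_ofPred_eq, Set.exists_mem_image, hammingDist_add_eq_hammingDist_sub]

theorem IsPerfect.switch {κ : Type*} {H : Set (ι → M)} (hH : IsPerfect H) {S : Set κ}
    {K K' : κ → Set (ι → M)} (hKH : ∀ i ∈ S, K i ⊆ H) (hK : S.PairwiseDisjoint K)
    (hnbhd : ∀ i ∈ S, nbhd (K' i) = nbhd (K i)) (hK' : ∀ i ∈ S, IsOneCode (K' i)) :
    IsPerfect ((H \ ⋃ i ∈ S, K i) ∪ ⋃ i ∈ S, K' i) := by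
  intro z
  obtain ⟨c, ⟨hcH, hzc⟩, hc⟩ := hH z
  have mem_K_of_near : ∀ i ∈ S, ∀ d ∈ K' i, hammingDist z d ≤ 1 → c ∈ K i := by
    intro i hi d hd hzd
    obtain ⟨e, he, hez⟩ : z ∈ nbhd (K i) :=
      hnbhd i hi ▸ ⟨d, hd, by rwa [hammingDist_comm]⟩
    rwa [← hc e ⟨hKH i hi he, by rwa [hammingDist_comm]⟩]
  by_cases hcK : c ∈ ⋃ i ∈ S, K i
  · obtain ⟨i, hi, hci⟩ := Set.mem_iUnion₂.1 hcK
    obtain ⟨d, hd, hdz⟩ : z ∈ nbhd (K' i) :=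
      (hnbhd i hi).symm ▸ ⟨c, hci, by rwa [hammingDist_comm]⟩
    refine ⟨d, ⟨Or.inr (Set.mem_iUnion₂.2 ⟨i, hi, hd⟩), by rwa [hammingDist_comm]⟩, ?_⟩
    rintro d' ⟨⟨hd'H, hd'K⟩ | hd', hzd'⟩
    · exact absurd (hc d' ⟨hd'H, hzd'⟩ ▸ hcK) hd'K
    · obtain ⟨j, hj, hd'j⟩ := Set.mem_iUnion₂.1 hd'
      obtain rfl : i = j := hK.elim hi hj
        (Set.not_disjoint_iff.2 ⟨c, hci, mem_K_of_near j hj d' hd'j hzd'⟩)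
      by_contra hne
      exact hK' i hi d' hd'j d hd hne z ⟨by rwa [hammingDist_comm], hdz⟩
  · refine ⟨c, ⟨Or.inl ⟨hcH, hcK⟩, hzc⟩, ?_⟩
    rintro d ⟨hd | hd, hzd⟩
    · exact hc d ⟨hd.1, hzd⟩
    · obtain ⟨i, hi, hdi⟩ := Set.mem_iUnion₂.1 hd
      exact absurd (Set.mem_iUnion₂.2 ⟨i, hi, mem_K_of_near i hi d hdi hzd⟩) hcK

theorem IsOneCode.three_le_hammingDist [DecidableEq ι] {C : Set (ι → M)} (hC : IsOneCode C)
    {x y : ι → M} (hx : x ∈ C) (hy : y ∈ C) (hxy : x ≠ y) :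
    3 ≤ hammingDist x y := by
  by_contra! hlt
  obtain ⟨i, hi⟩ := Function.ne_iff.1 hxy
  refine hC x hx y hy hxy (Function.update x i (y i)) ⟨?_, ?_⟩
  · refine (Finset.card_le_card fun a ha => ?_).trans (Finset.card_singleton i).le
    rw [Finset.mem_singleton]
    by_contra hai
    exact (Finset.mem_filter.1 ha).2 (Function.update_of_ne hai _ _).symm
  · calc hammingDist y (Function.update x i (y i))
        ≤ ((Finset.univ.filter fun a => x a ≠ y a).erase i).card := by
          refine Finset.card_le_card fun a ha => ?_
          have hai : a ≠ i := by
            rintro rfl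
            exact (Finset.mem_filter.1 ha).2 (Function.update_self a _ x).symm
          have hya := (Finset.mem_filter.1 ha).2
          rw [Function.update_of_ne hai] at hya
          exact Finset.mem_erase.2 ⟨hai, Finset.mem_filter.2 ⟨Finset.mem_univ a, Ne.symm hya⟩⟩
      _ = hammingDist x y - 1 :=
        Finset.card_erase_of_mem (Finset.mem_filter.2 ⟨Finset.mem_univ i, hi⟩)
      _ ≤ 1 := by omega

end Codes

namespace PA

theorem coe_ne_zero (β : PA F m) : (β : Fin m → F) ≠ 0 := by
  obtain ⟨i, hi, -⟩ := β.2
  intro h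
  rw [h] at hi
  exact zero_ne_one hi

theorem eq_of_coe_eq_smul {β γ : PA F m} {t : F} (h : (β : Fin m → F) = t • (γ : Fin m → F)) :
    β = γ := by
  obtain ⟨i, hi1, hi0⟩ := β.2
  obtain ⟨k, hk1, hk0⟩ := γ.2
  have happ : ∀ j, (β : Fin m → F) j = t * (γ : Fin m → F) j := fun j => congrFun h j
  have hik : i = k := by
    rcases lt_trichotomy i k with hlt | rfl | hgt
    · simpa [hi1, hk0 i hlt] using happ i
    · rfl
    · have ht : t ≠ 0 := by rintro rfl; exact coe_ne_zero β (by simpa using h)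
      simpa [hi0 k hgt, hk1, eq_comm, ht] using happ k
  subst hik
  have ht : t = 1 := by simpa [hi1, hk1, eq_comm] using happ i
  exact Subtype.ext (by rw [h, ht, one_smul])

theorem eq_zero_of_smul_add_smul_eq_zero {β γ : PA F m} (hβγ : β ≠ γ) {a b : F}
    (h : a • (β : Fin m → F) + b • (γ : Fin m → F) = 0) : a = 0 ∧ b = 0 := by
  have ha : a = 0 := by
    by_contra ha
    refine hβγ (eq_of_coe_eq_smul (t := -(a⁻¹ * b)) ?_)
    rw [neg_smul, eq_neg_iff_add_eq_zero]
    simpa [smul_add, smul_smul, inv_mul_cancel₀ ha] using congrArg (a⁻¹ • ·) h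
  subst ha
  rw [zero_smul, zero_add, smul_eq_zero] at h
  exact ⟨rfl, h.resolve_right (coe_ne_zero γ)⟩

theorem exists_smul_eq {v : Fin m → F} (hv : v ≠ 0) :
    ∃ (β : PA F m) (t : F), t ≠ 0 ∧ v = t • (β : Fin m → F) := by
  have hs : (Finset.univ.filter fun i => v i ≠ 0).Nonempty := by
    obtain ⟨i, hi⟩ := Function.ne_iff.1 hv
    exact ⟨i, Finset.mem_filter.2 ⟨Finset.mem_univ i, hi⟩⟩
  set i := (Finset.univ.filter fun i => v i ≠ 0).min' hs
  have hi : v i ≠ 0 := (Finset.mem_filter.1 (Finset.min'_mem _ hs)).2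
  refine ⟨⟨(v i)⁻¹ • v, i, inv_mul_cancel₀ hi, fun j hj => ?_⟩, v i, hi, by
    rw [smul_smul, mul_inv_cancel₀ hi, one_smul]⟩
  have hj0 : v j = 0 := by
    by_contra hj0
    exact (Finset.min'_le _ j (Finset.mem_filter.2 ⟨Finset.mem_univ j, hj0⟩)).not_gt hj
  simp [hj0]

end PA

variable (F m) in
def synd : (PA F m → F) →ₗ[F] (Fin m → F) := Fintype.linearCombination F Subtype.val

theorem coe_singleProj (i : Fin m) : ((singleProj i : PA F m) : Fin m → F) = Pi.single i 1 := rfl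

theorem coe_consProj {s : ℕ} (x : Fin s → F) :
    ((consProj x : PA F (s + 1)) : Fin (s + 1) → F) = Fin.cons 1 x := rfl

theorem mem_Hcode_iff {c : PA F m → F} : c ∈ Hcode F m ↔ synd F m c = 0 := Iff.rfl

theorem synd_single (β : PA F m) (t : F) : synd F m (Pi.single β t) = t • (β : Fin m → F) :=
  Fintype.linearCombination_apply_single F _ β t

theorem linearCombination_bar {V : Type*} [AddCommGroup V] [Module F V] (f : PA F m → V)
    (α : Fin m → F) : Fintype.linearCombination F f (bar α) = ∑ i, α i • f (singleProj i) := by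
  have hbar : bar α = ∑ i, Pi.single (singleProj i) (α i) := by
    funext β
    simp only [bar, Finset.sum_apply, Pi.single_apply, Subtype.ext_iff, singleProj]
  simp [hbar, map_sum, Fintype.linearCombination_apply_single]

theorem synd_bar (α : Fin m → F) : synd F m (bar α) = α := by
  ext j
  simp [synd, linearCombination_bar, singleProj, Pi.single_apply]

theorem single_eq_single_of_smul_eq {β γ : PA F m} {t u : F}
    (h : t • (β : Fin m → F) = u • (γ : Fin m → F)) :
    (Pi.single β t : PA F m → F) = Pi.single γ u := by
  by_cases hβγ : β = γ
  · subst hβγ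
    rw [← sub_eq_zero, ← sub_smul, smul_eq_zero] at h
    rw [sub_eq_zero.1 (h.resolve_right (PA.coe_ne_zero β))]
  · obtain ⟨rfl, hu⟩ := PA.eq_zero_of_smul_add_smul_eq_zero hβγ (a := t) (b := -u)
      (by rw [neg_smul, ← sub_eq_add_neg, h, sub_self])
    rw [neg_eq_zero.1 hu, Pi.single_zero, Pi.single_zero]

theorem Hcode.eq_of_add_single_eq {c d : PA F m → F} (hc : c ∈ Hcode F m) (hd : d ∈ Hcode F m)
    {β γ : PA F m} {t u : F} (h : c + Pi.single β t = d + Pi.single γ u) : c = d := by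
  rw [mem_Hcode_iff] at hc hd
  have hsynd := congrArg (synd F m) h
  rw [map_add, map_add, hc, hd, zero_add, zero_add, synd_single, synd_single] at hsynd
  rwa [single_eq_single_of_smul_eq hsynd, add_left_inj] at h

instance : Nonempty (PA F (m + 1)) := ⟨singleProj 0⟩

theorem isPerfect_Hcode : IsPerfect (Hcode F (m + 1)) := by
  intro z
  have hz : ∃ c ∈ Hcode F (m + 1), ∃ β t, z = c + Pi.single β t := by
    by_cases h : synd F (m + 1) z = 0
    · exact ⟨z, mem_Hcode_iff.2 h, singleProj 0, 0, by rw [Pi.single_zero, add_zero]⟩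
    · obtain ⟨β, t, -, hβ⟩ := PA.exists_smul_eq h
      refine ⟨z - Pi.single β t, ?_, β, t, (sub_add_cancel z _).symm⟩
      rw [mem_Hcode_iff, map_sub, synd_single, ← hβ, sub_self]
  obtain ⟨c, hc, β, t, rfl⟩ := hz
  refine ⟨c, ⟨hc, hammingDist_comm c _ ▸ hammingDist_le_one_iff.2 ⟨β, t, rfl⟩⟩, ?_⟩
  rintro d ⟨hd, hdz⟩
  obtain ⟨γ, u, h⟩ := hammingDist_le_one_iff.1 (hammingDist_comm d _ ▸ hdz)
  exact Hcode.eq_of_add_single_eq hd hc h.symm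

theorem Rcomp_subset_Hcode (δ : PA F m) : (Rcomp δ : Set (PA F m → F)) ⊆ Hcode F m :=
  fun _ hr => mem_Hcode_iff.2
    ((Submodule.span_le (p := LinearMap.ker (synd F m))).2 (fun _ hc => mem_Hcode_iff.1 hc.1) hr)

theorem exists_single_add_single_mem_Rcomp {δ β : PA F m} (hβδ : β ≠ δ) {t : F} (ht : t ≠ 0) :
    ∃ γ u, (Pi.single δ 1 + Pi.single β t + Pi.single γ u : PA F m → F) ∈ Rcomp δ := by
  have hv : (δ : Fin m → F) + t • (β : Fin m → F) ≠ 0 := fun h => ht <|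
    (PA.eq_zero_of_smul_add_smul_eq_zero (Ne.symm hβδ) (a := 1) (by rwa [one_smul])).2
  obtain ⟨γ, w, hw, hγ⟩ := PA.exists_smul_eq hv
  have hγδ : γ ≠ δ := by
    rintro rfl
    exact ht (PA.eq_zero_of_smul_add_smul_eq_zero hβδ (a := t) (b := 1 - w)
      (by rw [sub_smul, one_smul, ← hγ]; abel)).1
  have hγβ : γ ≠ β := by
    rintro rfl
    exact one_ne_zero (PA.eq_zero_of_smul_add_smul_eq_zero (Ne.symm hβδ) (a := 1) (b := t - w)
      (by rw [sub_smul, one_smul, ← hγ]; abel)).1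
  refine ⟨γ, -w, Submodule.subset_span ⟨?_, ?_, ?_⟩⟩
  · rw [mem_Hcode_iff, map_add, map_add, synd_single,
      synd_single, synd_single, one_smul, neg_smul, ← hγ, add_neg_cancel]
  · exact hammingNorm_single_add_single_add_single hβδ hγδ hγβ one_ne_zero ht (neg_ne_zero.2 hw)
  · simp [hβδ.symm, hγδ.symm]

theorem add_single_mem_nbhd_Rcomp {δ : PA F (m + 1)} {z : PA F (m + 1) → F}
    (hz : z ∈ nbhd (Rcomp δ : Set (PA F (m + 1) → F))) (a : F) :
    z + Pi.single δ a ∈ nbhd (Rcomp δ : Set (PA F (m + 1) → F)) := by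
  obtain ⟨r, hr, hrz⟩ := hz
  obtain ⟨β, t, rfl⟩ := hammingDist_le_one_iff.1 hrz
  suffices h : ∃ r' ∈ Rcomp δ, ∃ β' t', r + Pi.single β t + Pi.single δ a = r' + Pi.single β' t' by
    obtain ⟨r', hr', β', t', h⟩ := h
    exact ⟨r', hr', hammingDist_le_one_iff.2 ⟨β', t', h⟩⟩
  by_cases hβ : β = δ
  · exact ⟨r, hr, δ, t + a, by rw [hβ, add_assoc, ← Pi.single_add]⟩
  by_cases ht : t = 0
  · exact ⟨r, hr, δ, a, by rw [ht, Pi.single_zero, add_zero]⟩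
  by_cases ha : a = 0
  · exact ⟨r, hr, β, t, by rw [ha, Pi.single_zero, add_zero]⟩
  obtain ⟨γ, u, hg⟩ := exists_single_add_single_mem_Rcomp hβ (div_ne_zero ht ha)
  refine ⟨r + a • (Pi.single δ 1 + Pi.single β (t / a) + Pi.single γ u),
    add_mem hr (Submodule.smul_mem _ a hg), γ, -(a * u), ?_⟩
  simp only [smul_add, ← Pi.single_smul', smul_eq_mul, mul_one, mul_div_cancel₀ _ ha,
    Pi.single_neg]
  abel

theorem add_single_mem_nbhd_Rcomp_iff {δ : PA F (m + 1)} {z : PA F (m + 1) → F} {a : F} :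
    z + Pi.single δ a ∈ nbhd (Rcomp δ : Set (PA F (m + 1) → F)) ↔
      z ∈ nbhd (Rcomp δ : Set (PA F (m + 1) → F)) :=
  ⟨fun h => by
    simpa [add_assoc, ← Pi.single_add] using add_single_mem_nbhd_Rcomp h (-a),
    fun h => add_single_mem_nbhd_Rcomp h a⟩

section CondForm

variable {K V : Type*} [Field K] [DecidableEq K] [AddCommGroup V] [Module K V]

def condForm (A B : V →ₗ[K] K) (v : V) : K := if A v = 0 then B v else 0

variable {A B : V →ₗ[K] K}

theorem condForm_of_eq_zero {v : V} (hv : A v = 0) : condForm A B v = B v := if_pos hv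

theorem condForm_smul (t : K) (v : V) : condForm A B (t • v) = t * condForm A B v := by
  by_cases ht : t = 0 <;> simp [condForm, ht]

theorem condForm_add_condForm_eq_zero {p q : V} (hA : A p + A q = 0) (hB : B p + B q = 0) :
    condForm A B p + condForm A B q = 0 := by
  by_cases hp : A p = 0
  · rw [hp, zero_add] at hA
    rwa [condForm_of_eq_zero hp, condForm_of_eq_zero hA]
  · have hq : A q ≠ 0 := fun hq => hp (by rwa [hq, add_zero] at hA)
    simp [condForm, hp, hq]

end CondForm

theorem linearCombination_condForm_Rcomp {δ : PA F m} {A B : (Fin m → F) →ₗ[F] F}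
    (hA : A δ = 0) (hB : B δ = 0) {r : PA F m → F} (hr : r ∈ Rcomp δ) :
    Fintype.linearCombination F (fun α : PA F m => condForm A B α) r = 0 := by
  suffices h : Rcomp δ ≤ LinearMap.ker
      (Fintype.linearCombination F fun α : PA F m => condForm A B α) from h hr
  refine Submodule.span_le.2 fun c hc => ?_
  obtain ⟨hcH, hc3, hcδ⟩ := hc
  obtain ⟨β, γ, hc⟩ := exists_eq_single_add_single_add_single hc3 (hcδ ▸ one_ne_zero)
  rw [mem_Hcode_iff, hc, hcδ] at hcH
  rw [SetLike.mem_coe, LinearMap.mem_ker, hc, hcδ]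
  simp only [map_add, synd_single, Fintype.linearCombination_apply_single, one_smul,
    smul_eq_mul] at hcH ⊢
  have hAsum := congrArg A hcH
  have hBsum := congrArg B hcH
  rw [map_add, map_add, map_zero, hA, zero_add] at hAsum
  rw [map_add, map_add, map_zero, hB, zero_add] at hBsum
  rw [one_mul, condForm_of_eq_zero hA, hB, zero_add, ← condForm_smul, ← condForm_smul]
  exact condForm_add_condForm_eq_zero hAsum hBsum

theorem disjoint_compCoset_of_condForm {s : ℕ} {x y : Fin s → F}
    {A B : (Fin (s + 1) → F) →ₗ[F] F} (hAx : A (Fin.cons 1 x) = 0) (hAy : A (Fin.cons 1 y) = 0)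
    (hBx : B (Fin.cons 1 x) = 0) (hBy : B (Fin.cons 1 y) = 0)
    (hxy : ∑ i, (x i - y i) * condForm A B (Pi.single i.succ 1) ≠ 0) :
    Disjoint (compCoset x) (compCoset y) := by
  rw [Set.disjoint_left]
  rintro _ ⟨r, hr, rfl⟩ ⟨r', hr', h⟩
  have hL := congrArg (Fintype.linearCombination F fun α : PA F (s + 1) => condForm A B α) h
  simp only [map_add, map_sub, linearCombination_condForm_Rcomp hAx hBx hr,
    linearCombination_condForm_Rcomp hAy hBy hr', linearCombination_bar,
    Fintype.linearCombination_apply_single, Fin.sum_univ_succ, coe_singleProj, coe_consProj,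
    condForm_of_eq_zero hAx, condForm_of_eq_zero hAy, hBx, hBy, Fin.cons_zero, Fin.cons_succ,
    smul_eq_mul, one_mul, zero_add, sub_zero] at hL
  apply hxy
  simp only [sub_mul, Finset.sum_sub_distrib]
  linear_combination -hL

/-- The `2 × 2` minor in coordinates `a, b` of `w` and of the projection `tail u - u 0 • x` of `u`
from the point `(1, x)`. -/
def chartMinor {R : Type*} [CommRing R] {s : ℕ} (x w : Fin s → R) (a b : Fin s) :
    (Fin (s + 1) → R) →ₗ[R] R :=
  w b • (LinearMap.proj a.succ - x a • LinearMap.proj 0) -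
    w a • (LinearMap.proj b.succ - x b • LinearMap.proj 0)

theorem chartMinor_apply {R : Type*} [CommRing R] {s : ℕ} (x w : Fin s → R) (a b : Fin s)
    (u : Fin (s + 1) → R) :
    chartMinor x w a b u = w b * (u a.succ - x a * u 0) - w a * (u b.succ - x b * u 0) := by
  simp [chartMinor]

theorem disjoint_compCoset {s : ℕ} {x y : Fin s → F} (h : 3 ≤ hammingDist x y) :
    Disjoint (compCoset x) (compCoset y) := by
  obtain ⟨j, k, l, hj, hk, hl, hjk, hjl, hkl⟩ := Finset.two_lt_card_iff.1 h
  simp only [Finset.mem_filter, Finset.mem_univ, true_and] at hj hk hl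
  have hcons : ∀ a b z, chartMinor x (y - x) a b (Fin.cons 1 z) =
      (y b - x b) * (z a - x a) - (y a - x a) * (z b - x b) := by
    simp [chartMinor_apply]
  -- `A` is nonzero at `e (k + 1)` and `e (l + 1)`, so among unit vectors `ψ` sees only `e (j + 1)`.
  have hψ : ∀ i, condForm (chartMinor x (y - x) l k) (chartMinor x (y - x) j k)
      (Pi.single i.succ 1) = if i = j then y k - x k else 0 := by
    intro i
    by_cases hij : i = j
    · subst hij
      simp [condForm, chartMinor_apply, Ne.symm hjk, Ne.symm hjl]
    · by_cases hik : i = k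
      · subst hik
        simp [condForm, chartMinor_apply, hij, hkl, sub_eq_zero, hl]
      · by_cases hil : i = l
        · subst hil
          simp [condForm, chartMinor_apply, hij, hik, sub_eq_zero, Ne.symm hk]
        · simp [condForm, chartMinor_apply, hij, hik, hil]
  refine disjoint_compCoset_of_condForm (A := chartMinor x (y - x) l k)
    (B := chartMinor x (y - x) j k) (by rw [hcons]; ring) (by rw [hcons]; ring)
    (by rw [hcons]; ring) (by rw [hcons]; ring) ?_
  simp only [hψ, mul_ite, mul_zero, Finset.sum_ite_eq', Finset.mem_univ, if_true]
  exact mul_ne_zero (sub_ne_zero.2 hj) (sub_ne_zero.2 (Ne.symm hk))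

theorem compCoset_subset_Hcode {s : ℕ} (x : Fin s → F) : compCoset x ⊆ Hcode F (s + 1) := by
  rintro _ ⟨r, hr, rfl⟩
  rw [mem_Hcode_iff, map_add, map_sub,
    mem_Hcode_iff.1 (Rcomp_subset_Hcode _ hr), synd_bar, synd_single, one_smul, coe_consProj,
    sub_self, add_zero]

theorem isOneCode_image_add_Rcomp (δ : PA F (m + 1)) (v : PA F (m + 1) → F) :
    IsOneCode ((· + v) '' (Rcomp δ : Set (PA F (m + 1) → F))) :=
  (isPerfect_Hcode.isOneCode.mono (Rcomp_subset_Hcode δ)).image_add v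

theorem nbhd_image_add_bar_Rcomp {s : ℕ} (x : Fin s → F) :
    nbhd ((· + bar (Fin.cons 1 x)) '' (Rcomp (consProj x) : Set (PA F (s + 1) → F))) =
      nbhd (compCoset x) := by
  ext z
  rw [compCoset, mem_nbhd_image_add, mem_nbhd_image_add, sub_sub_eq_add_sub, add_sub_right_comm,
    add_single_mem_nbhd_Rcomp_iff]

theorem bar_cons_one_mem_PCode_iff {s : ℕ} {C : Set (Fin s → F)} {x : Fin s → F} :
    bar (Fin.cons 1 x) ∈ PCode C ↔ x ∈ C := by
  refine ⟨?_, fun hx => Or.inr (Set.mem_iUnion₂.2 ⟨x, hx, 0, zero_mem _, zero_add _⟩)⟩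
  rintro (⟨hH, -⟩ | hV)
  · rw [mem_Hcode_iff, synd_bar] at hH
    exact absurd (congrFun hH 0) one_ne_zero
  · obtain ⟨y, hy, r, hr, h⟩ := Set.mem_iUnion₂.1 hV
    have hsynd := congrArg (synd F (s + 1)) h
    rw [map_add, mem_Hcode_iff.1 (Rcomp_subset_Hcode _ hr), zero_add, synd_bar, synd_bar] at hsynd
    rwa [← Fin.cons_right_injective 1 hsynd]

theorem stmt11 {s : ℕ} (C : Set (Fin s → F)) (hC : IsOneCode C) :
    IsPerfect (PCode C) ∧ C = {x : Fin s → F | bar (Fin.cons 1 x) ∈ PCode C} :=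
  ⟨isPerfect_Hcode.switch (fun x _ => compCoset_subset_Hcode x)
      (fun _ hx _ hy hxy => disjoint_compCoset (hC.three_le_hammingDist hx hy hxy))
      (fun x _ => nbhd_image_add_bar_Rcomp x) (fun _ _ => isOneCode_image_add_Rcomp _ _),
    Set.ext fun _ => bar_cons_one_mem_PCode_iff.symm⟩
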